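/- Let (Ω, F, P) be a probability space, E ∈ F an event, and R : Ω → ℝ a random variable whose law has a density g (with respect to Lebesgue measure). Let f_u : ℝ → [0, ∞) be a measurable function such that for every Borel set A ⊆ ℝ one has P(E ∩ {R ∈ A}) ≤ ∫_A f_u(r) g(r) dr. Then P(E) ≤ ∫_ℝ min{f_u(r), 1} g(r) dr. -/

import Mathlib

/-!
Split `E` according to whether `R` lands in `A = {f_u ≤ 1}`. On `{R ∈ A}` the hypothesis gives
`∫_A f_u g = ∫_A min{f_u, 1} g`; on `{R ∉ A}` bound `P(E ∩ {R ∉ A})` by `P(R ∉ A) = ∫_{Aᶜ} g`,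
which is `∫_{Aᶜ} min{f_u, 1} g`. Adding the two pieces gives the claim.
-/

open MeasureTheory

section Density

variable {α : Type*} [MeasurableSpace α] {μ : Measure α} {g : α → ℝ}

lemma integrable_of_isFiniteMeasure_withDensity_ofReal (hg : Measurable g) (hg_nonneg : ∀ x, 0 ≤ g x)
    [IsFiniteMeasure (μ.withDensity fun x => ENNReal.ofReal (g x))] : Integrable g μ := by
  refine ⟨hg.aestronglyMeasurable, ?_⟩
  rw [hasFiniteIntegral_iff_ofReal (Filter.Eventually.of_forall hg_nonneg),
    ← setLIntegral_univ, ← withDensity_apply _ MeasurableSet.univ]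
  exact measure_lt_top _ _

lemma measureReal_withDensity_ofReal (hg : Measurable g) (hg_nonneg : ∀ x, 0 ≤ g x)
    {s : Set α} (hs : MeasurableSet s) :
    (μ.withDensity fun x => ENNReal.ofReal (g x)).real s = ∫ x in s, g x ∂μ := by
  rw [measureReal_def, withDensity_apply _ hs, integral_eq_lintegral_of_nonneg_ae
    (Filter.Eventually.of_forall hg_nonneg) hg.aestronglyMeasurable]

end Density

section Truncation

variable {α : Type*} [MeasurableSpace α] {μ : Measure α} {f g : α → ℝ}

lemma MeasureTheory.Integrable.min_one_mul (hg : Integrable g μ) (hf : Measurable f) (hf_nonneg : ∀ x, 0 ≤ f x) :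
    Integrable (fun x => min (f x) 1 * g x) μ := by
  refine hg.bdd_mul (c := 1) (hf.min measurable_const).aestronglyMeasurable
    (Filter.Eventually.of_forall fun x => ?_)
  rw [Real.norm_of_nonneg (le_min (hf_nonneg x) zero_le_one)]
  exact min_le_right _ _

lemma setIntegral_min_one_mul_of_le (hf : Measurable f) :
    ∫ x in {x | f x ≤ 1}, min (f x) 1 * g x ∂μ = ∫ x in {x | f x ≤ 1}, f x * g x ∂μ :=
  setIntegral_congr_fun (measurableSet_le hf measurable_const) fun x hx => by
    rw [min_eq_left hx]

lemma setIntegral_min_one_mul_of_not_le (hf : Measurable f) :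
    ∫ x in {x | f x ≤ 1}ᶜ, min (f x) 1 * g x ∂μ = ∫ x in {x | f x ≤ 1}ᶜ, g x ∂μ :=
  setIntegral_congr_fun (measurableSet_le hf measurable_const).compl fun x hx => by
    rw [min_eq_right (lt_of_not_ge (show ¬f x ≤ 1 from hx)).le, one_mul]

end Truncation

theorem parameterized_GFBT_tightest
    {Ω : Type*} [MeasurableSpace Ω] (P : Measure Ω) [IsProbabilityMeasure P]
    (E : Set Ω)
    (R : Ω → ℝ) (hR : Measurable R)
    (g : ℝ → ℝ) (hg_meas : Measurable g) (hg_nonneg : ∀ r, 0 ≤ g r)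
    (hlaw : Measure.map R P = volume.withDensity fun r => ENNReal.ofReal (g r))
    (fu : ℝ → ℝ) (hfu_meas : Measurable fu) (hfu_nonneg : ∀ r, 0 ≤ fu r)
    (hbound : ∀ A : Set ℝ, MeasurableSet A →
      (P (E ∩ R ⁻¹' A)).toReal ≤ ∫ r in A, fu r * g r) :
    (P E).toReal ≤ ∫ r, min (fu r) 1 * g r := by
  set A : Set ℝ := {r | fu r ≤ 1}
  have hA : MeasurableSet A := measurableSet_le hfu_meas measurable_const
  have : IsProbabilityMeasure (volume.withDensity fun r => ENNReal.ofReal (g r)) :=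
    hlaw ▸ Measure.isProbabilityMeasure_map hR.aemeasurable
  have hint : Integrable (fun r => min (fu r) 1 * g r) :=
    (integrable_of_isFiniteMeasure_withDensity_ofReal hg_meas hg_nonneg).min_one_mul
      hfu_meas hfu_nonneg
  calc P.real E = P.real (E ∩ R ⁻¹' A) + P.real (E \ R ⁻¹' A) :=
        (measureReal_inter_add_sdiff (hR hA)).symm
    _ ≤ (∫ r in A, fu r * g r) + P.real (R ⁻¹' Aᶜ) :=
        add_le_add (hbound A hA) (measureReal_mono fun _ hω => hω.2)
    _ = (∫ r in A, min (fu r) 1 * g r) + ∫ r in Aᶜ, min (fu r) 1 * g r := by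
        rw [← map_measureReal_apply hR hA.compl, hlaw,
          measureReal_withDensity_ofReal hg_meas hg_nonneg hA.compl,
          setIntegral_min_one_mul_of_le hfu_meas, setIntegral_min_one_mul_of_not_le hfu_meas]
    _ = ∫ r, min (fu r) 1 * g r := integral_add_compl hA hint
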